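/- Characterization of global entanglement witnesses by the symplectic trace: let Z be a real symmetric positive definite 2N×2N matrix with Williamson form S Z Sᵀ = diag(z₁,z₁,…,z_N,z_N), where S ∈ Sp(2N,ℝ) and z_i > 0. Then tr(Z·γ) ≥ 1 holds for every 2N×2N covariance matrix γ if and only if Σ_{i=1}^N z_i ≥ 1/2. -/

import Mathlib

open Matrix Polynomial
open ComplexOrder

noncomputable section

/-- The standard symplectic form matrix: block diagonal with 2×2 blocks [[0,1],[-1,0]]. -/
def symplForm (n : ℕ) : Matrix (Fin n) (Fin n) ℝ :=
  Matrix.of fun i j =>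
    if (i : ℕ) + 1 = (j : ℕ) ∧ (i : ℕ) % 2 = 0 then 1
    else if (j : ℕ) + 1 = (i : ℕ) ∧ (j : ℕ) % 2 = 0 then -1 else 0

/-- Membership in the real symplectic group: `S σ Sᵀ = σ`. -/
def IsSymplectic {n : ℕ} (S : Matrix (Fin n) (Fin n) ℝ) : Prop :=
  S * symplForm n * Sᵀ = symplForm n

/-- The Williamson diagonal matrix `diag(a₁,a₁,…,a_N,a_N)`. -/
def WDiag {N : ℕ} (a : Fin N → ℝ) : Matrix (Fin (2 * N)) (Fin (2 * N)) ℝ :=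
  Matrix.diagonal fun i => a ⟨(i : ℕ) / 2, by have := i.isLt; omega⟩

/-- A covariance matrix: real symmetric with `γ + iσ` positive semidefinite. -/
def IsCovMatrix {n : ℕ} (γ : Matrix (Fin n) (Fin n) ℝ) : Prop :=
  γ.IsSymm ∧
    (γ.map (Complex.ofReal) + Complex.I • (symplForm n).map Complex.ofReal).PosSemidef

/-- The block-diagonal direct sum of two square matrices. -/
def dirSum {m n : ℕ} (A : Matrix (Fin m) (Fin m) ℝ) (B : Matrix (Fin n) (Fin n) ℝ) :
    Matrix (Fin (m + n)) (Fin (m + n)) ℝ :=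
  Matrix.reindex finSumFinEquiv finSumFinEquiv (Matrix.fromBlocks A 0 0 B)

/-- Separability of a covariance matrix with respect to the split `A|B`. -/
def IsSepCov (nA nB : ℕ) (γ : Matrix (Fin (nA + nB)) (Fin (nA + nB)) ℝ) : Prop :=
  ∃ (γA : Matrix (Fin nA) (Fin nA) ℝ) (γB : Matrix (Fin nB) (Fin nB) ℝ),
    IsCovMatrix γA ∧ IsCovMatrix γB ∧ (γ - dirSum γA γB).PosSemidef

/-!
Conjugation by a symplectic matrix preserves covariance matrices, so with `γ' = S⁻ᵀ γ S⁻¹`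
we get `tr (Z γ) = tr (diag(z₁,z₁,…,z_N,z_N) γ') = ∑ₖ zₖ (γ'₂ₖ,₂ₖ + γ'₂ₖ₊₁,₂ₖ₊₁)`.
Evaluating the positive form `γ' + iσ` at `e₂ₖ + i e₂ₖ₊₁` gives `γ'₂ₖ,₂ₖ + γ'₂ₖ₊₁,₂ₖ₊₁ ≥ 2`,
hence `tr (Z γ) ≥ 2 ∑ zₖ`. The bound is attained at the covariance matrix `SᵀS`
(the image of the vacuum `1`), so a witness must have `2 ∑ zₖ ≥ 1`.
-/

theorem symplForm_transpose (n : ℕ) : (symplForm n)ᵀ = -symplForm n := by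
  ext i j
  simp only [transpose_apply, symplForm, of_apply, Matrix.neg_apply]
  split_ifs <;> first | omega | norm_num

theorem symplForm_apply_self {n : ℕ} (i : Fin n) : symplForm n i i = 0 := by
  simp only [symplForm, of_apply]
  split_ifs <;> first | omega | rfl

theorem symplForm_mul_self (N : ℕ) : symplForm (2 * N) * symplForm (2 * N) = -1 := by
  ext i j
  have hi := i.isLt
  let p : Fin (2 * N) := ⟨if (i : ℕ) % 2 = 0 then i + 1 else i - 1, by split_ifs <;> omega⟩
  rw [mul_apply, Finset.sum_eq_single p]
  · rw [Matrix.neg_apply, one_apply]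
    simp only [symplForm, of_apply, p, Fin.ext_iff]
    split_ifs <;> first | omega | norm_num
  · intro k _ hk
    simp only [symplForm, of_apply, p, ne_eq, Fin.ext_iff] at hk ⊢
    split_ifs at hk ⊢ <;> first | omega | simp
  · simp

namespace IsSymplectic

variable {N : ℕ} {S : Matrix (Fin (2 * N)) (Fin (2 * N)) ℝ}

theorem mul_neg_symplForm_transpose_symplForm (hS : IsSymplectic S) :
    S * -(symplForm (2 * N) * Sᵀ * symplForm (2 * N)) = 1 := by
  rw [mul_neg, ← Matrix.mul_assoc, ← Matrix.mul_assoc, hS, symplForm_mul_self, neg_neg]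

theorem isUnit_det (hS : IsSymplectic S) : IsUnit S.det :=
  isUnit_det_of_right_inverse hS.mul_neg_symplForm_transpose_symplForm

theorem transpose (hS : IsSymplectic S) : IsSymplectic Sᵀ := by
  have hinv := mul_eq_one_comm.mp hS.mul_neg_symplForm_transpose_symplForm
  unfold IsSymplectic
  calc Sᵀ * symplForm (2 * N) * Sᵀᵀ
      = -(symplForm (2 * N) * symplForm (2 * N)) * (Sᵀ * symplForm (2 * N) * S) := by
        rw [symplForm_mul_self, neg_neg, Matrix.one_mul, transpose_transpose]
    _ = symplForm (2 * N) * (-(symplForm (2 * N) * Sᵀ * symplForm (2 * N)) * S) := by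
        simp only [Matrix.mul_assoc, Matrix.neg_mul, Matrix.mul_neg]
    _ = symplForm (2 * N) := by rw [hinv, Matrix.mul_one]

theorem inv (hS : IsSymplectic S) : IsSymplectic S⁻¹ := by
  unfold IsSymplectic
  calc S⁻¹ * symplForm (2 * N) * S⁻¹ᵀ = S⁻¹ * (S * symplForm (2 * N) * Sᵀ) * S⁻¹ᵀ := by rw [hS]
    _ = (S⁻¹ * S) * symplForm (2 * N) * (S⁻¹ * S)ᵀ := by
        simp only [transpose_mul, Matrix.mul_assoc]
    _ = symplForm (2 * N) := by
        rw [nonsing_inv_mul _ hS.isUnit_det, transpose_one, Matrix.one_mul, Matrix.mul_one]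

end IsSymplectic

theorem map_ofReal_conjTranspose {m n : Type*} (A : Matrix m n ℝ) :
    (A.map Complex.ofReal)ᴴ = Aᵀ.map Complex.ofReal := by
  ext i j
  simp

theorem map_ofReal_mul {l m n : Type*} [Fintype m] (A : Matrix l m ℝ) (B : Matrix m n ℝ) :
    (A * B).map Complex.ofReal = A.map Complex.ofReal * B.map Complex.ofReal :=
  Matrix.map_mul (f := Complex.ofRealHom)

theorem IsCovMatrix.conj {n : ℕ} {γ T : Matrix (Fin n) (Fin n) ℝ} (hγ : IsCovMatrix γ)
    (hT : IsSymplectic T) : IsCovMatrix (T * γ * Tᵀ) := by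
  refine ⟨?_, ?_⟩
  · rw [IsSymm, transpose_mul, transpose_mul, transpose_transpose, hγ.1.eq, Matrix.mul_assoc]
  · have key : (T * γ * Tᵀ).map Complex.ofReal + Complex.I • (symplForm n).map Complex.ofReal
        = T.map Complex.ofReal
          * (γ.map Complex.ofReal + Complex.I • (symplForm n).map Complex.ofReal)
          * (T.map Complex.ofReal)ᴴ := by
      rw [map_ofReal_conjTranspose, Matrix.mul_add, Matrix.add_mul, Matrix.mul_smul,
        Matrix.smul_mul]
      simp only [← map_ofReal_mul]
      rw [show T * symplForm n * Tᵀ = symplForm n from hT]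
    rw [key]
    exact hγ.2.mul_mul_conjTranspose_same _

theorem isCovMatrix_one (N : ℕ) : IsCovMatrix (1 : Matrix (Fin (2 * N)) (Fin (2 * N)) ℝ) := by
  refine ⟨isSymm_one, ?_⟩
  rw [Matrix.map_one _ Complex.ofReal_zero Complex.ofReal_one]
  set σc := (symplForm (2 * N)).map Complex.ofReal
  set M := 1 + Complex.I • σc
  have hσc_sq : σc * σc = -1 := by
    rw [← map_ofReal_mul, symplForm_mul_self, Matrix.map_neg _ Complex.ofReal_neg,
      Matrix.map_one _ Complex.ofReal_zero Complex.ofReal_one]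
  have hσc_conjTranspose : σcᴴ = -σc := by
    rw [map_ofReal_conjTranspose, symplForm_transpose, Matrix.map_neg _ Complex.ofReal_neg]
  have hM_herm : Mᴴ = M := by
    simp [M, hσc_conjTranspose, Matrix.conjTranspose_smul]
  -- `(iσ)² = 1` makes `M / 2` a projection, so `M` is a multiple of the Gram matrix `Mᴴ M`
  have hM_sq : Mᴴ * M = (2 : ℝ) • M := by
    rw [hM_herm]
    simp only [M, Matrix.add_mul, Matrix.mul_add, Matrix.smul_mul, Matrix.mul_smul, hσc_sq,
      Matrix.one_mul, Matrix.mul_one]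
    rw [smul_add, smul_smul, Complex.I_mul_I, neg_one_smul, neg_neg]
    module
  have hM_gram : M = (2⁻¹ : ℝ) • (Mᴴ * M) := by
    rw [hM_sq, smul_smul]; norm_num
  rw [hM_gram]
  exact (posSemidef_conjTranspose_mul_self M).smul (by norm_num)

theorem IsCovMatrix.two_le_add_of_symplForm_eq_one {n : ℕ} {γ : Matrix (Fin n) (Fin n) ℝ}
    (hγ : IsCovMatrix γ) {i j : Fin n} (hij : symplForm n i j = 1) : 2 ≤ γ i i + γ j j := by
  have hji : symplForm n j i = -1 := by
    simpa [hij] using congr_fun₂ (symplForm_transpose n) i j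
  have hγji : γ j i = γ i j := congr_fun₂ hγ.1.eq i j
  set x : Fin n → ℂ := Pi.single i 1 + Pi.single j Complex.I
  have hquad : star x ⬝ᵥ
      (γ.map Complex.ofReal + Complex.I • (symplForm n).map Complex.ofReal) *ᵥ x
      = ((γ i i + γ j j - 2 : ℝ) : ℂ) := by
    simp only [x, star_add, Pi.star_single, star_one, RCLike.star_def, Complex.conj_I, mulVec_add,
      mulVec_single, MulOpposite.op_one, one_smul, op_smul_eq_smul, dotProduct_add, add_dotProduct,
      single_dotProduct, col_apply, Matrix.add_apply, map_apply, Matrix.smul_apply,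
      symplForm_apply_self, Complex.ofReal_zero, smul_eq_mul, mul_zero, add_zero, one_mul, hγji,
      hji, Complex.ofReal_neg, Complex.ofReal_one, mul_neg, mul_one, neg_mul, dotProduct_smul, hij,
      Complex.ofReal_sub, Complex.ofReal_add, Complex.ofReal_ofNat]
    linear_combination (2 - (γ j j : ℂ)) * Complex.I_sq
  have key := hγ.2.dotProduct_mulVec_nonneg x
  rw [hquad, Complex.zero_le_real] at key
  linarith

/-- `modeIndex N (k, b) = 2k + b`: the two quadratures of the `k`-th mode are adjacent. -/
def modeIndex (N : ℕ) : Fin N × Fin 2 ≃ Fin (2 * N) :=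
  finProdFinEquiv.trans (finCongr (Nat.mul_comm N 2))

section Modes

variable {N : ℕ}

@[simp]
theorem modeIndex_val (k : Fin N) (b : Fin 2) : (modeIndex N (k, b) : ℕ) = 2 * k + b := by
  simp [modeIndex, finProdFinEquiv, add_comm]

theorem sum_fin_two_mul_eq_sum_modeIndex {M : Type*} [AddCommMonoid M] (f : Fin (2 * N) → M) :
    ∑ i, f i = ∑ k, (f (modeIndex N (k, 0)) + f (modeIndex N (k, 1))) := by
  rw [← (modeIndex N).sum_comp, Fintype.sum_prod_type]
  simp only [Fin.sum_univ_two]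

theorem symplForm_modeIndex (k : Fin N) :
    symplForm (2 * N) (modeIndex N (k, 0)) (modeIndex N (k, 1)) = 1 := by
  simp [symplForm]

theorem trace_wDiag_mul (z : Fin N → ℝ) (A : Matrix (Fin (2 * N)) (Fin (2 * N)) ℝ) :
    (WDiag z * A).trace = ∑ k, z k * (A (modeIndex N (k, 0)) (modeIndex N (k, 0)) +
      A (modeIndex N (k, 1)) (modeIndex N (k, 1))) := by
  have hmode (k : Fin N) (b : Fin 2) :
      (⟨(modeIndex N (k, b) : ℕ) / 2, by omega⟩ : Fin N) = k := by
    ext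
    simp only [modeIndex_val]
    omega
  simp only [WDiag, trace, diag_apply, diagonal_mul, sum_fin_two_mul_eq_sum_modeIndex, hmode,
    mul_add]

theorem trace_wDiag (z : Fin N → ℝ) : (WDiag z).trace = 2 * ∑ k, z k := by
  rw [← Matrix.mul_one (WDiag z), trace_wDiag_mul, Finset.mul_sum]
  simp only [one_apply_eq, one_add_one_eq_two, mul_comm]

theorem IsCovMatrix.two_mul_sum_le_trace_wDiag_mul {z : Fin N → ℝ} (hz : ∀ k, 0 ≤ z k)
    {γ : Matrix (Fin (2 * N)) (Fin (2 * N)) ℝ} (hγ : IsCovMatrix γ) :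
    2 * ∑ k, z k ≤ (WDiag z * γ).trace := by
  rw [trace_wDiag_mul, Finset.mul_sum]
  refine Finset.sum_le_sum fun k _ => ?_
  rw [mul_comm]
  exact mul_le_mul_of_nonneg_left
    (hγ.two_le_add_of_symplForm_eq_one (symplForm_modeIndex k)) (hz k)

end Modes

theorem global_witness_characterization_general (N : ℕ)
    (Z S : Matrix (Fin (2 * N)) (Fin (2 * N)) ℝ) (z : Fin N → ℝ)
    (hS : IsSymplectic S) (hz : ∀ i, 0 < z i) (hW : S * Z * Sᵀ = WDiag z) :
    (∀ γ : Matrix (Fin (2 * N)) (Fin (2 * N)) ℝ, IsCovMatrix γ → 1 ≤ (Z * γ).trace) ↔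
      (1 / 2 : ℝ) ≤ ∑ i, z i := by
  constructor
  · intro hwit
    have hcov : IsCovMatrix (Sᵀ * S) := by
      simpa using (isCovMatrix_one N).conj hS.transpose
    have htrace : (Z * (Sᵀ * S)).trace = 2 * ∑ i, z i := by
      rw [trace_mul_cycle', ← Matrix.mul_assoc, hW, trace_wDiag]
    linarith [hwit _ hcov]
  · intro hsum γ hγ
    have hZ : Z = S⁻¹ * WDiag z * S⁻¹ᵀ := by
      rw [← hW, transpose_nonsing_inv, Matrix.mul_assoc S,
        nonsing_inv_mul_cancel_left _ _ hS.isUnit_det,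
        mul_nonsing_inv_cancel_right _ _ (by simpa using hS.isUnit_det)]
    have hcov : IsCovMatrix (S⁻¹ᵀ * γ * S⁻¹) := by
      simpa using hγ.conj hS.inv.transpose
    have htrace : (Z * γ).trace = (WDiag z * (S⁻¹ᵀ * γ * S⁻¹)).trace := by
      rw [hZ, Matrix.mul_assoc, Matrix.mul_assoc, trace_mul_comm]
      simp only [Matrix.mul_assoc]
    linarith [hcov.two_mul_sum_le_trace_wDiag_mul fun i => (hz i).le]

/-- Characterization of global entanglement witnesses by the symplectic trace:
`tr(Zγ) ≥ 1` for every covariance matrix `γ` iff the symplectic trace of `Z` is `≥ 1/2`. -/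
theorem global_witness_characterization (N : ℕ) (hN : 1 ≤ N)
    (Z S : Matrix (Fin (2 * N)) (Fin (2 * N)) ℝ) (z : Fin N → ℝ)
    (hZsymm : Z.IsSymm) (hZpos : Z.PosDef)
    (hS : IsSymplectic S) (hz : ∀ i, 0 < z i) (hW : S * Z * Sᵀ = WDiag z) :
    (∀ γ : Matrix (Fin (2 * N)) (Fin (2 * N)) ℝ, IsCovMatrix γ → 1 ≤ (Z * γ).trace) ↔
      (1 / 2 : ℝ) ≤ ∑ i, z i :=
  global_witness_characterization_general N Z S z hS hz hW
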